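/- Let q be a prime power and n, k positive integers with k | n. Let U be a k-dimensional F_q-subspace of F_{q^n}. The cyclic orbit code orb(U) = {αU : α ∈ F_{q^n}^*} has minimum subspace distance 2k if and only if U = βF_{q^k} for some β ∈ F_{q^n}^*; in that case |orb(U)| = (q^n - 1)/(q^k - 1). -/

import Mathlib

/-!
Shifts of `U` all have dimension `k`, so `d(αU, βU) = 2k` exactly when `αU ∩ βU = 0`, and
minimum distance `2k` means the orbit has at least two elements and any two distinct shifts meet
trivially.

In that case pick `0 ≠ u ∈ U` and put `V = u⁻¹U ∋ 1`. For `γ ≠ 0` we have `γ ∈ γV`, so `γ ∈ V`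
forces `γV ∩ V ≠ 0`, i.e. `γV = V`; conversely `γV = V` gives `γ = γ • 1 ∈ V`. Thus `V \ {0}` is
the stabilizer of `V` in `Lˣ`, a group of order `|V| - 1 = q^k - 1`. By Lagrange every element
of `V` is a root of `X^(q^k) - X`, which has at most `q^k` roots, so `V = F_{q^k}` and
`U = u F_{q^k}`; orbit–stabilizer gives `|orb(U)| = (q^n - 1)/(q^k - 1)`.

Conversely, if `U = β F_{q^k}` then any nonzero `x ∈ γU` satisfies `γU = x F_{q^k}`, because
`F_{q^k} \ {0}` is a multiplicative group; so two shifts sharing a nonzero element coincide.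
-/

open Module

/-- The cyclic shift `αU = {αu : u ∈ U}`. -/
noncomputable def cyclicShift {K L : Type*} [Field K] [Field L] [Algebra K L]
    (α : L) (U : Submodule K L) : Submodule K L :=
  U.map (LinearMap.mulLeft K α)

/-- The subspace distance `d(X,Y) = dim X + dim Y - 2 dim(X ∩ Y)`. -/
noncomputable def subspaceDist {K L : Type*} [Field K] [Field L] [Algebra K L]
    (X Y : Submodule K L) : ℕ :=
  finrank K X + finrank K Y - 2 * finrank K ↥(X ⊓ Y)

/-- The minimum subspace distance of a code. -/
noncomputable def minDist {K L : Type*} [Field K] [Field L] [Algebra K L]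
    (C : Set (Submodule K L)) : ℕ :=
  sInf {d : ℕ | ∃ X ∈ C, ∃ Y ∈ C, X ≠ Y ∧ d = subspaceDist X Y}

open Pointwise MulAction

theorem Submodule.finrank_pointwise_smul {R M G : Type*} [Ring R] [AddCommGroup M] [Module R M]
    [Group G] [DistribMulAction G M] [SMulCommClass G R M] (g : G) (U : Submodule R M) :
    finrank R ↥(g • U) = finrank R U :=
  LinearEquiv.finrank_map_eq (DistribMulAction.toLinearEquiv R M g) U

open Polynomial in
theorem ncard_setOf_pow_eq_self_le {F : Type*} [Field F] {m : ℕ} (hm : 1 < m) :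
    {y : F | y ^ m = y}.ncard ≤ m := by
  classical
  have hp := FiniteField.X_pow_card_sub_X_ne_zero F hm
  have hroots : {y : F | y ^ m = y} = ((X ^ m - X : F[X]).roots.toFinset : Set F) := by
    ext y
    simp [mem_roots hp, sub_eq_zero]
  calc {y : F | y ^ m = y}.ncard = (X ^ m - X : F[X]).roots.toFinset.card := by
        rw [hroots, Set.ncard_coe_finset]
    _ ≤ Multiset.card (X ^ m - X : F[X]).roots := Multiset.toFinset_card_le _
    _ ≤ m := (card_roots' _).trans (FiniteField.X_pow_card_sub_X_natDegree_eq F hm).le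

section

variable {K L : Type*} [Field K] [Field L] [Algebra K L]

theorem subspaceDist_le {X Y : Submodule K L} {k : ℕ}
    (hX : finrank K X = k) (hY : finrank K Y = k) : subspaceDist X Y ≤ 2 * k := by
  rw [subspaceDist, hX, hY]
  omega

theorem subspaceDist_eq_two_mul_iff [FiniteDimensional K L] {X Y : Submodule K L} {k : ℕ}
    (hX : finrank K X = k) (hY : finrank K Y = k) :
    subspaceDist X Y = 2 * k ↔ Disjoint X Y := by
  have hle : finrank K ↥(X ⊓ Y) ≤ k := hX ▸ Submodule.finrank_mono inf_le_left
  rw [subspaceDist, hX, hY, disjoint_iff, ← Submodule.finrank_eq_zero]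
  omega

theorem minDist_eq_two_mul_iff [FiniteDimensional K L] {C : Set (Submodule K L)} {k : ℕ}
    (hk : 0 < k) (hC : ∀ X ∈ C, finrank K X = k) :
    minDist C = 2 * k ↔ C.Nontrivial ∧ C.Pairwise Disjoint := by
  set D := {d : ℕ | ∃ X ∈ C, ∃ Y ∈ C, X ≠ Y ∧ d = subspaceDist X Y}
  change sInf D = 2 * k ↔ _
  constructor
  · intro h
    obtain ⟨_, X, hX, Y, hY, hXY, -⟩ : D.Nonempty := by
      by_contra hD
      rw [Set.not_nonempty_iff_eq_empty.mp hD, Nat.sInf_empty] at h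
      omega
    refine ⟨⟨X, hX, Y, hY, hXY⟩, fun X hX Y hY hXY => ?_⟩
    rw [← subspaceDist_eq_two_mul_iff (hC X hX) (hC Y hY)]
    exact le_antisymm (subspaceDist_le (hC X hX) (hC Y hY))
      (h ▸ Nat.sInf_le ⟨X, hX, Y, hY, hXY, rfl⟩)
  · rintro ⟨⟨X, hX, Y, hY, hXY⟩, hdisj⟩
    have hD : D = {2 * k} := by
      refine Set.eq_singleton_iff_unique_mem.mpr ⟨⟨X, hX, Y, hY, hXY, ?_⟩, ?_⟩
      · exact ((subspaceDist_eq_two_mul_iff (hC X hX) (hC Y hY)).mpr (hdisj hX hY hXY)).symm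
      · rintro _ ⟨X, hX, Y, hY, hXY, rfl⟩
        exact (subspaceDist_eq_two_mul_iff (hC X hX) (hC Y hY)).mpr (hdisj hX hY hXY)
    rw [hD, csInf_singleton]

theorem setOf_cyclicShift_eq_orbit (U : Submodule K L) :
    {V : Submodule K L | ∃ α : L, α ≠ 0 ∧ V = cyclicShift α U} = orbit Lˣ U := by
  ext V
  constructor
  · rintro ⟨α, hα, rfl⟩
    exact ⟨Units.mk0 α hα, rfl⟩
  · rintro ⟨g, rfl⟩
    exact ⟨g, g.ne_zero, rfl⟩

theorem exists_one_mem_inv_smul {U : Submodule K L} (hU : U ≠ ⊥) :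
    ∃ g : Lˣ, (1 : L) ∈ g⁻¹ • U := by
  obtain ⟨u, hu, hu0⟩ := (Submodule.ne_bot_iff U).mp hU
  exact ⟨Units.mk0 u hu0, u, hu, by simp [hu0]⟩

theorem nontrivial_orbit_units {U : Submodule K L} (hbot : U ≠ ⊥) (htop : U ≠ ⊤) :
    (orbit Lˣ U).Nontrivial := by
  obtain ⟨u, hu, hu0⟩ := (Submodule.ne_bot_iff U).mp hbot
  obtain ⟨x, hx⟩ := SetLike.exists_not_mem_of_ne_top U htop
  have hx0 : x ≠ 0 := by rintro rfl; exact hx U.zero_mem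
  let g := Units.mk0 (x * u⁻¹) (by simp [hx0, hu0])
  refine ⟨g • U, mem_orbit U g, U, mem_orbit_self U, fun h => hx ?_⟩
  rw [← h]
  exact ⟨u, hu, by simp [g, hu0]⟩

theorem pairwise_disjoint_orbit_of_coe_eq {m : ℕ} {β : L} {U : Submodule K L}
    (hU : (U : Set L) = {x | ∃ y, y ^ m = y ∧ x = β * y}) :
    (orbit Lˣ U).Pairwise Disjoint := by
  have mem_smul (g : Lˣ) (z : L) : z ∈ g • U ↔ ∃ y, y ^ m = y ∧ z = g * β * y := by
    refine (Submodule.mem_smul_pointwise_iff_exists z g U).trans ?_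
    simp only [← SetLike.mem_coe, hU, Set.mem_ofPred_eq, Units.smul_def, smul_eq_mul]
    constructor
    · rintro ⟨_, ⟨y, hy, rfl⟩, rfl⟩
      exact ⟨y, hy, by ring⟩
    · rintro ⟨y, hy, rfl⟩
      exact ⟨β * y, ⟨y, hy, rfl⟩, by ring⟩
  have coset (g : Lˣ) {x : L} (hx : x ∈ g • U) (hx0 : x ≠ 0) (z : L) :
      z ∈ g • U ↔ ∃ y, y ^ m = y ∧ z = x * y := by
    obtain ⟨r, hr, rfl⟩ := (mem_smul g x).mp hx
    have hr0 : r ≠ 0 := by rintro rfl; simp at hx0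
    rw [mem_smul]
    constructor
    · rintro ⟨y, hy, rfl⟩
      exact ⟨r⁻¹ * y, by rw [mul_pow, inv_pow, hr, hy], by field_simp⟩
    · rintro ⟨y, hy, rfl⟩
      exact ⟨r * y, by rw [mul_pow, hr, hy], by ring⟩
  rintro _ ⟨g, rfl⟩ _ ⟨h, rfl⟩ hne
  rw [Submodule.disjoint_def]
  by_contra! ⟨x, hxg, hxh, hx0⟩
  exact hne (SetLike.ext fun z => (coset g hxg hx0 z).trans (coset h hxh hx0 z).symm)

theorem mem_stabilizer_iff_coe_mem {V : Submodule K L} (h1 : (1 : L) ∈ V)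
    (hV : (orbit Lˣ V).Pairwise Disjoint) (g : Lˣ) :
    g ∈ stabilizer Lˣ V ↔ (g : L) ∈ V := by
  have hg := Submodule.smul_mem_pointwise_smul (1 : L) g V h1
  rw [Units.smul_def g (1 : L), smul_eq_mul, mul_one] at hg
  rw [mem_stabilizer_iff]
  refine ⟨fun h => h ▸ hg, fun hgV => ?_⟩
  by_contra hne
  exact g.ne_zero (Submodule.disjoint_def.mp (hV (mem_orbit V g) (mem_orbit_self V) hne) _ hg hgV)

theorem card_stabilizer_eq_card_sub_one [Finite L] {V : Submodule K L} (h1 : (1 : L) ∈ V)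
    (hV : (orbit Lˣ V).Pairwise Disjoint) :
    Nat.card (stabilizer Lˣ V) = Nat.card V - 1 := by
  have himage : ((↑) : Lˣ → L) '' (stabilizer Lˣ V : Set Lˣ) = (V : Set L) \ {0} := by
    ext x
    constructor
    · rintro ⟨g, hg, rfl⟩
      exact ⟨(mem_stabilizer_iff_coe_mem h1 hV g).mp hg, g.ne_zero⟩
    · rintro ⟨hx, hx0⟩
      exact ⟨Units.mk0 x hx0, (mem_stabilizer_iff_coe_mem h1 hV _).mpr hx, rfl⟩
  rw [← SetLike.coe_sort_coe, Nat.card_coe_set_eq,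
    ← Set.ncard_image_of_injective _ Units.val_injective, himage,
    Set.ncard_sdiff_singleton_of_mem V.zero_mem, ← Nat.card_coe_set_eq]
  rfl

theorem coe_eq_setOf_pow_card_eq_self [Finite L] {V : Submodule K L} (h1 : (1 : L) ∈ V)
    (hV : (orbit Lˣ V).Pairwise Disjoint) :
    (V : Set L) = {y | y ^ Nat.card V = y} := by
  have hcard : 1 < Nat.card V := by
    have : Nontrivial V := Submodule.nontrivial_iff_ne_bot.mpr
      ((Submodule.ne_bot_iff V).mpr ⟨1, h1, one_ne_zero⟩)
    exact Finite.one_lt_card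
  refine Set.eq_of_subset_of_ncard_le (fun y hy => ?_) ?_ (Set.toFinite _)
  · by_cases hy0 : y = 0
    · simp [hy0, zero_pow (by omega : Nat.card V ≠ 0)]
    · have hg := (mem_stabilizer_iff_coe_mem h1 hV (Units.mk0 y hy0)).mpr hy
      have hpow := congr_arg (fun g : stabilizer Lˣ V => ((g : Lˣ) : L))
        (pow_card_eq_one' (x := (⟨_, hg⟩ : stabilizer Lˣ V)))
      simp only [card_stabilizer_eq_card_sub_one h1 hV, SubgroupClass.coe_pow,
        Units.val_pow_eq_pow_val, Units.val_mk0, OneMemClass.coe_one, Units.val_one] at hpow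
      rw [Set.mem_ofPred_eq, ← Nat.sub_add_cancel hcard.le, pow_succ, hpow, one_mul]
  · rw [← Nat.card_coe_set_eq]
    exact ncard_setOf_pow_eq_self_le hcard

theorem coe_units_smul_eq_setOf_pow_card_eq_self [Finite L] {V : Submodule K L}
    (h1 : (1 : L) ∈ V) (hV : (orbit Lˣ V).Pairwise Disjoint) (g : Lˣ) :
    ((g • V : Submodule K L) : Set L) = {x | ∃ y, y ^ Nat.card V = y ∧ x = (g : L) * y} := by
  change (g : L) • (V : Set L) = _
  rw [coe_eq_setOf_pow_card_eq_self h1 hV]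
  ext x
  simp [Set.mem_smul_set, eq_comm]

theorem card_orbit_eq_div [Finite L] {V : Submodule K L} (h1 : (1 : L) ∈ V)
    (hV : (orbit Lˣ V).Pairwise Disjoint) :
    Nat.card (orbit Lˣ V) = (Nat.card L - 1) / (Nat.card V - 1) := by
  rw [Nat.card_coe_set_eq, ← index_stabilizer, ← card_stabilizer_eq_card_sub_one h1 hV,
    ← Nat.card_units]
  exact (Nat.div_eq_of_eq_mul_left Nat.card_pos (Subgroup.index_mul_card _).symm).symm

end

theorem stmt_19_general (q n k : ℕ) (hk : 0 < k) (hklt : k < n)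
    (K L : Type*) [Field K] [Fintype K] [Field L] [Fintype L] [Algebra K L]
    (hK : Fintype.card K = q) (hL : Fintype.card L = q ^ n)
    (U : Submodule K L) (hU : finrank K U = k) :
    (minDist {V : Submodule K L | ∃ α : L, α ≠ 0 ∧ V = cyclicShift α U} = 2 * k ↔
      ∃ β : L, β ≠ 0 ∧ (U : Set L) = {x : L | ∃ y : L, y ^ (q ^ k) = y ∧ x = β * y}) ∧
    (minDist {V : Submodule K L | ∃ α : L, α ≠ 0 ∧ V = cyclicShift α U} = 2 * k →
      Set.ncard {V : Submodule K L | ∃ α : L, α ≠ 0 ∧ V = cyclicShift α U} =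
        (q ^ n - 1) / (q ^ k - 1)) := by
  have hC : ∀ X ∈ orbit Lˣ U, finrank K X = k := by
    rintro _ ⟨g, rfl⟩
    exact (U.finrank_pointwise_smul g).trans hU
  rw [setOf_cyclicShift_eq_orbit, minDist_eq_two_mul_iff hk hC]
  have hn : finrank K L = n := Nat.pow_right_injective (hK ▸ Fintype.one_lt_card)
    (show q ^ finrank K L = q ^ n by rw [← hL, Module.card_eq_pow_finrank (K := K), hK])
  have hbot : U ≠ ⊥ := by rintro rfl; rw [finrank_bot] at hU; omega
  have htop : U ≠ ⊤ := by rintro rfl; rw [finrank_top] at hU; omega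
  obtain ⟨g, h1⟩ := exists_one_mem_inv_smul hbot
  have hcard : Nat.card ↥(g⁻¹ • U) = q ^ k := by
    classical
    rw [Nat.card_eq_fintype_card, Module.card_eq_pow_finrank (K := K), hK,
      hC _ (mem_orbit U g⁻¹)]
  rw [← orbit_smul g⁻¹ U]
  refine ⟨⟨fun ⟨_, hV⟩ => ⟨g, g.ne_zero, ?_⟩, fun ⟨β, _, hβ⟩ => ?_⟩, fun ⟨_, hV⟩ => ?_⟩
  · rw [← hcard, ← coe_units_smul_eq_setOf_pow_card_eq_self h1 hV, smul_inv_smul]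
  · rw [orbit_smul]
    exact ⟨nontrivial_orbit_units hbot htop, pairwise_disjoint_orbit_of_coe_eq hβ⟩
  · rw [← Nat.card_coe_set_eq, card_orbit_eq_div h1 hV, Nat.card_eq_fintype_card, hL, hcard]

/-- For `k ∣ n`, `k < n`, and a `k`-dimensional `F_q`-subspace `U` of
`F_{q^n}`, the orbit code `orb(U) = {αU : α ∈ F_{q^n}^*}` has minimum subspace distance
`2k` if and only if `U = βF_{q^k}` for some `β ∈ F_{q^n}^*` (where
`F_{q^k} = {y : y^{q^k} = y}` is the subfield of order `q^k`); in that case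
`|orb(U)| = (q^n - 1)/(q^k - 1)`. -/
theorem stmt_19 (q n k : ℕ) (hq : IsPrimePow q) (hk : 0 < k) (hkn : k ∣ n) (hklt : k < n)
    (K L : Type*) [Field K] [Fintype K] [Field L] [Fintype L] [Algebra K L]
    (hK : Fintype.card K = q) (hL : Fintype.card L = q ^ n)
    (U : Submodule K L) (hU : finrank K U = k) :
    (minDist {V : Submodule K L | ∃ α : L, α ≠ 0 ∧ V = cyclicShift α U} = 2 * k ↔
      ∃ β : L, β ≠ 0 ∧ (U : Set L) = {x : L | ∃ y : L, y ^ (q ^ k) = y ∧ x = β * y}) ∧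
    (minDist {V : Submodule K L | ∃ α : L, α ≠ 0 ∧ V = cyclicShift α U} = 2 * k →
      Set.ncard {V : Submodule K L | ∃ α : L, α ≠ 0 ∧ V = cyclicShift α U} =
        (q ^ n - 1) / (q ^ k - 1)) :=
  stmt_19_general q n k hk hklt K L hK hL U hU
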